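/- arXiv:1907.10840 — 7 statements merged into one kernel-verified Lean document; each statement's English description precedes it below -/
import Mathlib

section
/- Let α ∈ (0,1) and ε ∈ (0,1) be constants, let (V_k)_{k∈ℕ} be a sequence of nonnegative real numbers with V_0 > 0, and let γ : (0,∞) → (0,∞) be a function satisfying γ(v) ≥ (1−ε)·γ(V_0) for all v ∈ (0, V_0]. If for every k ∈ ℕ one has V_{k+1} ≤ V_k, and moreover V_{k+1} ≤ V_k − γ(V_k)·V_k^α whenever V_k > 0, then there exists a finite N ∈ ℕ such that V_k = 0 for all k ≥ N (finite-time stable convergence of the discrete-time Lyapunov sequence to zero). -/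
/-- Paper's Lemma 1: discrete-time finite-time stability. -/
theorem stmt_0 (α ε : ℝ) (hα : α ∈ Set.Ioo (0:ℝ) 1) (hε : ε ∈ Set.Ioo (0:ℝ) 1)
    (V : ℕ → ℝ) (hVnn : ∀ k, 0 ≤ V k) (hV0 : 0 < V 0)
    (γ : ℝ → ℝ) (hγpos : ∀ v : ℝ, 0 < v → 0 < γ v)
    (hγlb : ∀ v : ℝ, 0 < v → v ≤ V 0 → (1 - ε) * γ (V 0) ≤ γ v)
    (hmono : ∀ k, V (k + 1) ≤ V k)
    (hdec : ∀ k, 0 < V k → V (k + 1) ≤ V k - γ (V k) * (V k) ^ α) :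
    ∃ N : ℕ, ∀ k ≥ N, V k = 0 := by
  obtain ⟨hα0, hα1⟩ := hα
  obtain ⟨hε0, hε1⟩ := hε
  set c := (1 - ε) * γ (V 0) with hc
  have hcpos : 0 < c := mul_pos (by linarith) (hγpos _ hV0)
  set δ := c ^ (1 / (1 - α)) with hδ
  have hδpos : 0 < δ := Real.rpow_pos_of_pos hcpos _
  have hanti : Antitone V := antitone_nat_of_succ_le hmono
  have hle0 : ∀ k, V k ≤ V 0 := fun k => hanti (Nat.zero_le k)
  -- once V k ≤ δ, the next value is 0
  have hkill : ∀ k, V k ≤ δ → V (k + 1) = 0 := by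
    intro k hk
    rcases eq_or_lt_of_le (hVnn k) with h0 | h0
    · have h1 := hmono k
      have h2 := hVnn (k + 1)
      linarith
    · have hγ := hγlb (V k) h0 (hle0 k)
      have hdk := hdec k h0
      have hVα : 0 < (V k) ^ α := Real.rpow_pos_of_pos h0 _
      have hexp : (V k) ^ (1 - α) ≤ c := by
        have h1 : (V k) ^ (1 - α) ≤ δ ^ (1 - α) :=
          Real.rpow_le_rpow h0.le hk (by linarith)
        have h2 : δ ^ (1 - α) = c := by
          rw [hδ, ← Real.rpow_mul hcpos.le]
          rw [one_div_mul_cancel (by linarith : (1 : ℝ) - α ≠ 0), Real.rpow_one]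
        linarith [h2 ▸ h1]
      have hckα : V k ≤ c * (V k) ^ α := by
        have : V k = (V k) ^ α * (V k) ^ (1 - α) := by
          rw [← Real.rpow_add h0]; norm_num
        calc V k = (V k) ^ α * (V k) ^ (1 - α) := this
          _ ≤ (V k) ^ α * c := mul_le_mul_of_nonneg_left hexp hVα.le
          _ = c * (V k) ^ α := mul_comm _ _
      have hprod : c * (V k) ^ α ≤ γ (V k) * (V k) ^ α :=
        mul_le_mul_of_nonneg_right hγ hVα.le
      have h2 : V (k + 1) ≤ 0 := by linarith
      linarith [hVnn (k + 1)]
  -- there is some k with V k ≤ δ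
  have hex : ∃ k, V k ≤ δ := by
    by_contra h
    push_neg at h
    set d := c * δ ^ α with hd
    have hdpos : 0 < d := mul_pos hcpos (Real.rpow_pos_of_pos hδpos _)
    have hstep : ∀ k, V (k + 1) ≤ V k - d := by
      intro k
      have h0 : 0 < V k := hδpos.trans (h k)
      have hdk := hdec k h0
      have hγ := hγlb (V k) h0 (hle0 k)
      have hαle : δ ^ α ≤ (V k) ^ α :=
        Real.rpow_le_rpow hδpos.le (h k).le hα0.le
      have hδα : 0 < δ ^ α := Real.rpow_pos_of_pos hδpos _
      nlinarith
    have hind : ∀ k : ℕ, V k ≤ V 0 - k * d := by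
      intro k
      induction k with
      | zero => simp
      | succ n ih =>
        have := hstep n
        push_cast
        linarith
    obtain ⟨n, hn⟩ := exists_nat_gt (V 0 / d)
    have hn' : V 0 < n * d := by
      rw [div_lt_iff₀ hdpos] at hn; linarith
    have := hind n
    have := hVnn n
    linarith
  obtain ⟨k, hk⟩ := hex
  refine ⟨k + 1, fun j hj => le_antisymm ?_ (hVnn j)⟩
  have h1 : V j ≤ V (k + 1) := hanti hj
  rw [hkill k hk] at h1
  exact h1
end

section
/- Let α ∈ (0,1) and let γ > 0 be a constant. If (V_k)_{k∈ℕ} is a sequence of nonnegative real numbers satisfying V_{k+1} ≤ V_k − γ·V_k^α for every k ∈ ℕ, then there exists a finite N ∈ ℕ such that V_k = 0 for all k ≥ N. -/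
/-- Constant-gain discrete-time finite-time stability. -/
theorem stmt_1 (α γ : ℝ) (hα : α ∈ Set.Ioo (0:ℝ) 1) (hγ : 0 < γ)
    (V : ℕ → ℝ) (hVnn : ∀ k, 0 ≤ V k)
    (hdec : ∀ k, V (k + 1) ≤ V k - γ * (V k) ^ α) :
    ∃ N : ℕ, ∀ k ≥ N, V k = 0 := by
  obtain ⟨hα0, hα1⟩ := hα
  have h1α : (0:ℝ) < 1 - α := by linarith
  set ε : ℝ := γ ^ ((1:ℝ)/(1-α)) with hεdef
  have hε0 : 0 < ε := Real.rpow_pos_of_pos hγ _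
  have hεγ : ε ^ (1-α) = γ := by
    rw [hεdef, ← Real.rpow_mul hγ.le, one_div_mul_cancel (ne_of_gt h1α), Real.rpow_one]
  -- Claim A: if V k ≤ ε then V (k+1) = 0
  have claimA : ∀ k, V k ≤ ε → V (k+1) = 0 := by
    intro k hk
    have hstep := hdec k
    rcases eq_or_lt_of_le (hVnn k) with h0 | h0
    · have : V (k+1) ≤ 0 := by
        rw [← h0] at hstep
        rw [Real.zero_rpow (ne_of_gt hα0)] at hstep
        linarith
      linarith [hVnn (k+1)]
    · -- V k > 0, and V k ≤ ε, so γ * (V k)^α ≥ V k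
      have h1 : (V k) ^ (1-α) ≤ ε ^ (1-α) :=
        Real.rpow_le_rpow h0.le hk h1α.le
      have h2 : (V k) ^ (1-α) ≤ γ := by rwa [hεγ] at h1
      have h3 : V k = (V k) ^ α * (V k) ^ (1-α) := by
        rw [← Real.rpow_add h0]
        simp
      have h4 : V k ≤ γ * (V k) ^ α := by
        have hpow : (0:ℝ) < (V k) ^ α := Real.rpow_pos_of_pos h0 _
        calc V k = (V k) ^ α * (V k) ^ (1-α) := h3
          _ ≤ (V k) ^ α * γ := by nlinarith
          _ = γ * (V k) ^ α := mul_comm _ _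
      have : V (k+1) ≤ 0 := by linarith
      linarith [hVnn (k+1)]
  -- Claim C: ∃ k, V k ≤ ε
  have hδ : 0 < γ * ε ^ α := mul_pos hγ (Real.rpow_pos_of_pos hε0 _)
  have claimC : ∃ k, V k ≤ ε := by
    by_contra hcon
    push_neg at hcon
    have key : ∀ k : ℕ, V k ≤ V 0 - k * (γ * ε ^ α) := by
      intro k
      induction k with
      | zero => simp
      | succ n ih =>
        have h1 : ε ^ α ≤ (V n) ^ α :=
          Real.rpow_le_rpow hε0.le (hcon n).le hα0.le
        have h2 : γ * ε ^ α ≤ γ * (V n) ^ α := by nlinarith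
        have := hdec n
        push_cast
        push_cast at ih
        linarith
    obtain ⟨k, hk⟩ := exists_nat_gt (V 0 / (γ * ε ^ α))
    have := key k
    have : V 0 < k * (γ * ε ^ α) := by
      rwa [div_lt_iff₀ hδ] at hk
    linarith [hcon k, hε0]
  obtain ⟨k, hk⟩ := claimC
  refine ⟨k + 1, fun m hm => ?_⟩
  -- show V m = 0 for all m ≥ k+1, by induction from V (k+1) = 0
  have base : V (k+1) = 0 := claimA k hk
  obtain ⟨d, rfl⟩ := Nat.exists_eq_add_of_le hm
  induction d with
  | zero => simpa using base
  | succ n ih =>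
    have hprev : V (k + 1 + n) = 0 := ih (Nat.le_add_right _ _)
    have : V (k + 1 + n) ≤ ε := by rw [hprev]; exact hε0.le
    exact claimA (k+1+n) this
end

section
/- Let l ≥ 1 be an integer, let L ∈ ℝ^{l×l} be symmetric positive definite, let β > 0 and p ∈ (1,2), and define B(e) = ((eᵀLe)^{1−1/p} − β)/((eᵀLe)^{1−1/p} + β) for e ∈ ℝ^l. If a sequence (e_k)_{k∈ℕ} in ℝ^l satisfies e_{k+1} = B(e_k)·e_k for all k, then the sequence k ↦ e_kᵀ L e_k is non-increasing, it is strictly decreasing at every k for which e_k ≠ 0, and e_k → 0 as k → ∞. -/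
open Matrix

/-- The observer gain function B of Theorem 1. -/
noncomputable def Bfun (l : ℕ) (L : Matrix (Fin l) (Fin l) ℝ) (β p : ℝ)
    (e : Fin l → ℝ) : ℝ :=
  ((e ⬝ᵥ L.mulVec e) ^ (1 - 1 / p) - β) / ((e ⬝ᵥ L.mulVec e) ^ (1 - 1 / p) + β)

/-!
Every error e_k is a scalar multiple c_k e_0, and the Lyapunov value V_k = e_kᵀ L e_k obeys
V_{k+1} = g(V_k)² V_k with g(t) = (t^r - β)/(t^r + β), r = 1 - 1/p. Since |g(t)| < 1 for t > 0,
V is antitone and its limit is a fixed point of the continuous map t ↦ g(t)² t on [0, ∞),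
hence 0. Then c_k² = V_k / V_0 → 0, so e_k = c_k e_0 → 0.
-/

open Filter Set Topology

theorem tendsto_zero_of_antitone_of_succ_eq {f : ℝ → ℝ} {u : ℕ → ℝ}
    (hf : ContinuousOn f (Ici 0)) (hf_lt : ∀ x, 0 < x → f x < x)
    (hu : Antitone u) (hu_nonneg : ∀ k, 0 ≤ u k) (hu_succ : ∀ k, u (k + 1) = f (u k)) :
    Tendsto u atTop (𝓝 0) := by
  have hlim : Tendsto u atTop (𝓝 (⨅ k, u k)) :=
    tendsto_atTop_ciInf hu ⟨0, by rintro _ ⟨k, rfl⟩; exact hu_nonneg k⟩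
  have ha : 0 ≤ ⨅ k, u k := le_ciInf hu_nonneg
  have hfix : f (⨅ k, u k) = ⨅ k, u k := by
    have hf_lim : Tendsto (fun k => f (u k)) atTop (𝓝 (f (⨅ k, u k))) :=
      (hf _ ha).tendsto.comp (tendsto_nhdsWithin_iff.2 ⟨hlim, .of_forall hu_nonneg⟩)
    refine tendsto_nhds_unique hf_lim ?_
    simpa only [Function.comp_def, hu_succ] using hlim.comp (tendsto_add_atTop_nat 1)
  obtain ha0 | ha0 := ha.eq_or_lt
  · rwa [← ha0] at hlim
  · exact absurd hfix (hf_lt _ ha0).ne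

theorem eq_prod_smul_of_succ_eq_smul {R M : Type*} [CommMonoid R] [MulAction R M]
    {e : ℕ → M} {b : ℕ → R} (h : ∀ k, e (k + 1) = b k • e k) (k : ℕ) :
    e k = (∏ i ∈ Finset.range k, b i) • e 0 := by
  induction k with
  | zero => simp
  | succ k ih => rw [h, ih, smul_smul, Finset.prod_range_succ, mul_comm]

theorem Matrix.dotProduct_mulVec_smul {n R : Type*} [Fintype n] [CommRing R]
    (L : Matrix n n R) (c : R) (x : n → R) :
    (c • x) ⬝ᵥ L *ᵥ (c • x) = c ^ 2 * (x ⬝ᵥ L *ᵥ x) := by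
  rw [mulVec_smul, smul_dotProduct, dotProduct_smul, smul_eq_mul, smul_eq_mul]
  ring

theorem Matrix.PosDef.tendsto_smul_of_tendsto_dotProduct_mulVec {n : Type*} [Fintype n]
    {L : Matrix n n ℝ} (hL : L.PosDef) {c : ℕ → ℝ} (x : n → ℝ)
    (h : Tendsto (fun k => (c k • x) ⬝ᵥ L *ᵥ (c k • x)) atTop (𝓝 0)) :
    Tendsto (fun k => c k • x) atTop (𝓝 0) := by
  rcases eq_or_ne x 0 with rfl | hx
  · simpa only [smul_zero] using tendsto_const_nhds
  have hq : 0 < x ⬝ᵥ L *ᵥ x := by simpa using hL.dotProduct_mulVec_pos hx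
  have hc_sq : Tendsto (fun k => c k ^ 2) atTop (𝓝 0) := by
    have h' := h.div_const (x ⬝ᵥ L *ᵥ x)
    simpa only [dotProduct_mulVec_smul, mul_div_cancel_right₀ _ hq.ne', zero_div] using h'
  have hc : Tendsto c atTop (𝓝 0) := by
    refine (tendsto_zero_iff_abs_tendsto_zero c).2 (show Tendsto (fun k => |c k|) _ _ from ?_)
    simpa only [Real.sqrt_sq_eq_abs, Real.sqrt_zero] using hc_sq.sqrt
  simpa using hc.smul_const x

noncomputable def observerGain (β r t : ℝ) : ℝ := (t ^ r - β) / (t ^ r + β)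

section observerGain

variable {β r t : ℝ}

theorem observerGain_sq_le_one (hβ : 0 < β) (ht : 0 ≤ t) : observerGain β r t ^ 2 ≤ 1 := by
  have htr : 0 ≤ t ^ r := Real.rpow_nonneg ht r
  rw [observerGain, div_pow, div_le_one (by positivity)]
  nlinarith

theorem observerGain_sq_lt_one (hβ : 0 < β) (ht : 0 < t) : observerGain β r t ^ 2 < 1 := by
  have htr : 0 < t ^ r := Real.rpow_pos_of_pos ht r
  rw [observerGain, div_pow, div_lt_one (by positivity)]
  nlinarith

theorem continuousOn_observerGain (hβ : 0 < β) (hr : 0 ≤ r) :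
    ContinuousOn (observerGain β r) (Ici 0) := fun t ht =>
  have hpow : ContinuousAt (· ^ r) t := Real.continuousAt_rpow_const t r (.inr hr)
  ((hpow.sub continuousAt_const).div (hpow.add continuousAt_const)
    (add_pos_of_nonneg_of_pos (Real.rpow_nonneg ht r) hβ).ne').continuousWithinAt

end observerGain

theorem stmt_3_general (l : ℕ) (L : Matrix (Fin l) (Fin l) ℝ)
    (hL : L.PosDef)
    (β p : ℝ) (hβ : 0 < β) (hp : p ∈ Set.Ioo (1:ℝ) 2)
    (e : ℕ → Fin l → ℝ)
    (hrec : ∀ k, e (k + 1) = Bfun l L β p (e k) • e k) :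
    (∀ k, e (k + 1) ⬝ᵥ L.mulVec (e (k + 1)) ≤ e k ⬝ᵥ L.mulVec (e k)) ∧
    (∀ k, e k ≠ 0 → e (k + 1) ⬝ᵥ L.mulVec (e (k + 1)) < e k ⬝ᵥ L.mulVec (e k)) ∧
    Filter.Tendsto e Filter.atTop (nhds 0) := by
  set V : ℕ → ℝ := fun k => e k ⬝ᵥ L *ᵥ e k
  set r := 1 - 1 / p
  have hr : 0 ≤ r := sub_nonneg.2 ((div_le_one (by linarith [hp.1])).2 hp.1.le)
  have hV_nonneg (k : ℕ) : 0 ≤ V k := hL.posSemidef.dotProduct_mulVec_nonneg (e k)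
  have hV_succ (k : ℕ) : V (k + 1) = observerGain β r (V k) ^ 2 * V k := by
    simp only [V, hrec k, dotProduct_mulVec_smul]
    rfl
  have hV_le (k : ℕ) : V (k + 1) ≤ V k := by
    rw [hV_succ]
    exact mul_le_of_le_one_left (hV_nonneg k) (observerGain_sq_le_one hβ (hV_nonneg k))
  have hV_lt (k : ℕ) (hk : e k ≠ 0) : V (k + 1) < V k := by
    have hpos : 0 < V k := hL.dotProduct_mulVec_pos hk
    rw [hV_succ]
    exact mul_lt_of_lt_one_left hpos (observerGain_sq_lt_one hβ hpos)
  refine ⟨hV_le, hV_lt, ?_⟩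
  have hV_lim : Tendsto (fun k => e k ⬝ᵥ L *ᵥ e k) atTop (𝓝 0) :=
    tendsto_zero_of_antitone_of_succ_eq
      (((continuousOn_observerGain hβ hr).pow 2).mul continuousOn_id)
      (fun t ht => mul_lt_of_lt_one_left ht (observerGain_sq_lt_one hβ ht))
      (antitone_nat_of_succ_le hV_le) hV_nonneg hV_succ
  obtain ⟨c, hc⟩ : ∃ c : ℕ → ℝ, e = fun k => c k • e 0 :=
    ⟨_, funext (eq_prod_smul_of_succ_eq_smul hrec)⟩
  rw [hc] at hV_lim ⊢
  exact hL.tendsto_smul_of_tendsto_dotProduct_mulVec (e 0) hV_lim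

/-- Theorem 1 (stability/convergence content): the observer error recursion
e_{k+1} = B(e_k) e_k makes eᵀLe non-increasing, strictly decreasing off 0,
and drives e_k → 0. -/
theorem stmt_3 (l : ℕ) (hl : 1 ≤ l) (L : Matrix (Fin l) (Fin l) ℝ)
    (hLsymm : L.IsSymm) (hL : L.PosDef)
    (β p : ℝ) (hβ : 0 < β) (hp : p ∈ Set.Ioo (1:ℝ) 2)
    (e : ℕ → Fin l → ℝ)
    (hrec : ∀ k, e (k + 1) = Bfun l L β p (e k) • e k) :
    (∀ k, e (k + 1) ⬝ᵥ L.mulVec (e (k + 1)) ≤ e k ⬝ᵥ L.mulVec (e k)) ∧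
    (∀ k, e k ≠ 0 → e (k + 1) ⬝ᵥ L.mulVec (e (k + 1)) < e k ⬝ᵥ L.mulVec (e k)) ∧
    Filter.Tendsto e Filter.atTop (nhds 0) :=
  stmt_3_general l L hL β p hβ hp e hrec
end

section
/- Let l ≥ 1 be an integer, let L ∈ ℝ^{l×l} be symmetric positive definite, let β > 0 and p ∈ (1,2), and define B(e) = ((eᵀLe)^{1−1/p} − β)/((eᵀLe)^{1−1/p} + β) for e ∈ ℝ^l. Let (e_k)_{k∈ℕ} in ℝ^l satisfy e_{k+1} = B(e_k)·e_k, and set V_k := (1/2)·e_kᵀ L e_k. Then for every k ∈ ℕ: V_{k+1} − V_k = −γ(V_k)·V_k^{1/p}, where γ(V) := 4β·2^{1−1/p}·V^{2−2/p} / ((2V)^{1−1/p} + β)² for V > 0 and γ(0) := 0. -/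
/-! Scaling `e` by `b` scales the quadratic form by `b²`, so `V_{k+1} - V_k = (b² - 1) V_k` with
`b = (A - β)/(A + β)`, `A = (2 V_k)^(1 - 1/p)`, and `1 - b² = 4 A β / (A + β)²`. What remains is the
exponent bookkeeping `2^(1 - 1/p) V^(2 - 2/p) V^(1/p) = A V`. -/

open Matrix

/-- The Lyapunov-difference gain γ of eqs. (24)-(25). -/
noncomputable def gamFun (β p V : ℝ) : ℝ :=
  if V = 0 then 0
  else 4 * β * (2:ℝ) ^ (1 - 1 / p) * V ^ (2 - 2 / p) / ((2 * V) ^ (1 - 1 / p) + β) ^ 2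

open Real

lemma dotProduct_mulVec_smul_self {n R : Type*} [Fintype n] [CommSemiring R]
    (M : Matrix n n R) (c : R) (x : n → R) :
    (c • x) ⬝ᵥ M *ᵥ (c • x) = c ^ 2 * (x ⬝ᵥ M *ᵥ x) := by
  rw [mulVec_smul, dotProduct_smul, smul_dotProduct, smul_eq_mul, smul_eq_mul]
  ring

lemma gamFun_mul_rpow_one_div {β V : ℝ} (p : ℝ) (hV : 0 ≤ V) :
    gamFun β p V * V ^ (1 / p) =
      4 * β * (2 * V) ^ (1 - 1 / p) * V / ((2 * V) ^ (1 - 1 / p) + β) ^ 2 := by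
  rcases hV.eq_or_lt with rfl | hV
  · simp [gamFun]
  have hexp : V ^ (2 - 2 / p) * V ^ (1 / p) = V ^ (1 - 1 / p) * V := by
    rw [← rpow_add hV, ← rpow_add_one hV.ne']
    ring_nf
  rw [gamFun, if_neg hV.ne', mul_rpow zero_le_two hV.le, div_mul_eq_mul_div, mul_assoc _ (V ^ _),
    hexp]
  ring

lemma sq_contraction_mul_sub_self {β : ℝ} (hβ : 0 < β) (p : ℝ) {V : ℝ} (hV : 0 ≤ V) :
    (((2 * V) ^ (1 - 1 / p) - β) / ((2 * V) ^ (1 - 1 / p) + β)) ^ 2 * V - V =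
      -gamFun β p V * V ^ (1 / p) := by
  have hden : 0 < (2 * V) ^ (1 - 1 / p) + β := by positivity
  rw [neg_mul, gamFun_mul_rpow_one_div p hV]
  field_simp
  ring

theorem stmt_4_general (l : ℕ) (L : Matrix (Fin l) (Fin l) ℝ)
    (hL : L.PosDef)
    (β p : ℝ) (hβ : 0 < β)
    (e : ℕ → Fin l → ℝ)
    (hrec : ∀ k, e (k + 1) = Bfun l L β p (e k) • e k)
    (V : ℕ → ℝ) (hV : ∀ k, V k = (1/2) * (e k ⬝ᵥ L.mulVec (e k))) :
    ∀ k, V (k + 1) - V k = -(gamFun β p (V k)) * (V k) ^ ((1:ℝ) / p) := by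
  intro k
  have hQ : e k ⬝ᵥ L *ᵥ e k = 2 * V k := by
    rw [hV k]
    ring
  have hV_nonneg : 0 ≤ V k := by
    have := hL.posSemidef.dotProduct_mulVec_nonneg (e k)
    rw [star_trivial] at this
    linarith
  have hnext : V (k + 1) = Bfun l L β p (e k) ^ 2 * V k := by
    rw [hV, hrec, dotProduct_mulVec_smul_self, hQ]
    ring
  rw [hnext, Bfun, hQ]
  exact sq_contraction_mul_sub_self hβ p hV_nonneg

/-- Exact Lyapunov difference identity (eqs. (24)-(25)) for the observer recursion. -/
theorem stmt_4 (l : ℕ) (hl : 1 ≤ l) (L : Matrix (Fin l) (Fin l) ℝ)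
    (hLsymm : L.IsSymm) (hL : L.PosDef)
    (β p : ℝ) (hβ : 0 < β) (hp : p ∈ Set.Ioo (1:ℝ) 2)
    (e : ℕ → Fin l → ℝ)
    (hrec : ∀ k, e (k + 1) = Bfun l L β p (e k) • e k)
    (V : ℕ → ℝ) (hV : ∀ k, V k = (1/2) * (e k ⬝ᵥ L.mulVec (e k))) :
    ∀ k, V (k + 1) - V k = -(gamFun β p (V k)) * (V k) ^ ((1:ℝ) / p) :=
  stmt_4_general l L hL β p hβ e hrec V hV
end

section
/- Let β > 0 and p ∈ (1,2), and define γ : [0,∞) → ℝ by γ(V) = 4β·2^{1−1/p}·V^{2−2/p} / ((2V)^{1−1/p} + β)² for V > 0 and γ(0) = 0. Then γ is continuous, strictly increasing on [0,∞), satisfies 0 < γ(V) < 4β/2^{1−1/p} for every V > 0, and sup_{V>0} γ(V) = 4β/2^{1−1/p}. In particular, γ is a class-K function of V that is not class-K∞ (it is bounded above). -/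
/-!
With `q = 1 - 1/p > 0`, we have `V^(2-2/p) = (V^q)^2` and `(2V)^q = 2^q V^q`, so on `[0, ∞)`
`γ(V) = (4β / 2^q) · s((2V)^q)^2` with the saturation `s(t) = t / (t + β)`.
The map `s` increases strictly from `s(0) = 0` towards its limit `1`, and `V ↦ (2V)^q` increases
strictly from `0` to `∞`; every claim follows.
-/

open Filter Set Topology Real

section Saturation

variable {β : ℝ}

lemma strictMonoOn_div_add_const (hβ : 0 < β) :
    StrictMonoOn (fun t : ℝ => t / (t + β)) (Ici 0) := by
  intro x hx y hy hxy
  simp only [mem_Ici] at hx hy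
  rw [div_lt_div_iff₀ (by linarith) (by linarith)]
  nlinarith

lemma div_add_const_lt_one (hβ : 0 < β) {t : ℝ} (ht : 0 ≤ t) : t / (t + β) < 1 :=
  (div_lt_one (by linarith)).2 (by linarith)

lemma tendsto_div_add_const_atTop (β : ℝ) :
    Tendsto (fun t : ℝ => t / (t + β)) atTop (𝓝 1) := by
  have h : Tendsto (fun t : ℝ => 1 - β / (t + β)) atTop (𝓝 (1 - 0)) :=
    tendsto_const_nhds.sub <| tendsto_const_nhds.div_atTop <|
      tendsto_atTop_add_const_right _ β tendsto_id
  rw [sub_zero] at h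
  refine h.congr' ?_
  filter_upwards [eventually_gt_atTop (-β)] with t ht
  have : t + β ≠ 0 := by linarith
  field_simp
  ring

end Saturation

section Gain

variable {β p : ℝ}

lemma one_sub_one_div_pos (hp : 1 < p) : 0 < 1 - 1 / p :=
  sub_pos.2 ((div_lt_one (by linarith)).2 hp)

lemma gamFun_eq_of_nonneg (hβ : 0 < β) (hp : 1 < p) {V : ℝ} (hV : 0 ≤ V) :
    gamFun β p V = 4 * β / 2 ^ (1 - 1 / p) *
      ((2 * V) ^ (1 - 1 / p) / ((2 * V) ^ (1 - 1 / p) + β)) ^ 2 := by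
  have hq := one_sub_one_div_pos hp
  rcases hV.eq_or_lt with rfl | hV
  · rw [gamFun, if_pos rfl, mul_zero, zero_rpow hq.ne']
    simp
  have hsq : V ^ (2 - 2 / p) = (V ^ (1 - 1 / p)) ^ 2 := by
    rw [← rpow_natCast, ← rpow_mul hV.le]
    ring_nf
  have hmul : (2 * V) ^ (1 - 1 / p) = 2 ^ (1 - 1 / p) * V ^ (1 - 1 / p) :=
    mul_rpow zero_le_two hV.le
  have hden : 2 ^ (1 - 1 / p) * V ^ (1 - 1 / p) + β ≠ 0 := by positivity
  rw [gamFun, if_neg hV.ne', hsq, hmul]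
  field_simp

lemma continuousOn_gamFun (hβ : 0 < β) (hp : 1 < p) : ContinuousOn (gamFun β p) (Ici 0) := by
  have hq := one_sub_one_div_pos hp
  have hw : ContinuousOn (fun V : ℝ => (2 * V) ^ (1 - 1 / p)) (Ici 0) :=
    (continuous_const.mul continuous_id).continuousOn.rpow_const fun _ _ => Or.inr hq.le
  refine ContinuousOn.congr ?_ fun V hV => gamFun_eq_of_nonneg hβ hp hV
  refine continuousOn_const.mul ((hw.div (hw.add continuousOn_const) fun V hV => ?_).pow 2)
  have : 0 ≤ (2 * V) ^ (1 - 1 / p) := rpow_nonneg (by simpa using hV) _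
  exact (add_pos_of_nonneg_of_pos this hβ).ne'

lemma strictMonoOn_gamFun (hβ : 0 < β) (hp : 1 < p) : StrictMonoOn (gamFun β p) (Ici 0) := by
  have hq := one_sub_one_div_pos hp
  intro x hx y hy hxy
  simp only [mem_Ici] at hx hy
  have hw : (2 * x) ^ (1 - 1 / p) < (2 * y) ^ (1 - 1 / p) :=
    rpow_lt_rpow (by linarith) (by linarith) hq
  have hs := strictMonoOn_div_add_const hβ (mem_Ici.2 (by positivity))
    (mem_Ici.2 (by positivity)) hw
  rw [gamFun_eq_of_nonneg hβ hp hx, gamFun_eq_of_nonneg hβ hp hy]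
  gcongr

lemma gamFun_pos (hβ : 0 < β) (hp : 1 < p) {V : ℝ} (hV : 0 < V) : 0 < gamFun β p V := by
  rw [gamFun_eq_of_nonneg hβ hp hV.le]
  positivity

lemma gamFun_lt (hβ : 0 < β) (hp : 1 < p) {V : ℝ} (hV : 0 < V) :
    gamFun β p V < 4 * β / 2 ^ (1 - 1 / p) := by
  have hw : 0 ≤ (2 * V) ^ (1 - 1 / p) := by positivity
  rw [gamFun_eq_of_nonneg hβ hp hV.le]
  refine mul_lt_of_lt_one_right (by positivity) (pow_lt_one₀ (by positivity) ?_ two_ne_zero)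
  exact div_add_const_lt_one hβ hw

lemma tendsto_gamFun_atTop (hβ : 0 < β) (hp : 1 < p) :
    Tendsto (gamFun β p) atTop (𝓝 (4 * β / 2 ^ (1 - 1 / p))) := by
  have hw : Tendsto (fun V : ℝ => (2 * V) ^ (1 - 1 / p)) atTop atTop :=
    (tendsto_rpow_atTop (one_sub_one_div_pos hp)).comp (tendsto_id.const_mul_atTop two_pos)
  have h := (((tendsto_div_add_const_atTop β).comp hw).pow 2).const_mul
    (4 * β / 2 ^ (1 - 1 / p))
  rw [one_pow, mul_one] at h
  refine h.congr' ?_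
  filter_upwards [eventually_ge_atTop 0] with V hV
  exact (gamFun_eq_of_nonneg hβ hp hV).symm

end Gain

/-- γ is a class-K function of V that is bounded above (not class-K∞):
continuous, strictly increasing on [0,∞), 0 < γ(V) < 4β/2^{1-1/p} for V > 0,
with supremum 4β/2^{1-1/p}. -/
theorem stmt_5 (β p : ℝ) (hβ : 0 < β) (hp : p ∈ Set.Ioo (1:ℝ) 2) :
    ContinuousOn (gamFun β p) (Set.Ici 0) ∧
    StrictMonoOn (gamFun β p) (Set.Ici 0) ∧
    (∀ V : ℝ, 0 < V → 0 < gamFun β p V ∧ gamFun β p V < 4 * β / (2:ℝ) ^ (1 - 1 / p)) ∧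
    IsLUB (gamFun β p '' Set.Ioi 0) (4 * β / (2:ℝ) ^ (1 - 1 / p)) := by
  have hp1 : 1 < p := hp.1
  refine ⟨continuousOn_gamFun hβ hp1, strictMonoOn_gamFun hβ hp1,
    fun V hV => ⟨gamFun_pos hβ hp1 hV, gamFun_lt hβ hp1 hV⟩, ?_, ?_⟩
  · rintro _ ⟨V, hV, rfl⟩
    exact (gamFun_lt hβ hp1 hV).le
  · intro b hb
    refine le_of_tendsto (tendsto_gamFun_atTop hβ hp1) ?_
    filter_upwards [eventually_gt_atTop 0] with V hV using hb ⟨V, hV, rfl⟩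
end

section
/- Let β > 0, p ∈ (1,2), V_0 > 0 and χ ∈ (0,1), and set μ := β/(2V_0)^{1−1/p}. Define γ(V) = 4β·2^{1−1/p}·V^{2−2/p} / ((2V)^{1−1/p} + β)² for V > 0. Then for every V with χ·V_0 < V < V_0, the ratio satisfies γ(V)/γ(V_0) > ( 1 − μ(1 − χ^{1−1/p})/(χ^{1−1/p} + μ) )², and this lower bound lies in (0,1). -/
/-- Explicit lower bound (eq. (27)) on the gain ratio γ(V)/γ(V₀) on (χV₀, V₀). -/
theorem stmt_6 (β p V0 χ : ℝ) (hβ : 0 < β) (hp : p ∈ Set.Ioo (1:ℝ) 2)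
    (hV0 : 0 < V0) (hχ : χ ∈ Set.Ioo (0:ℝ) 1) :
    ∀ V : ℝ, χ * V0 < V → V < V0 →
      (1 - (β / (2 * V0) ^ (1 - 1 / p)) * (1 - χ ^ (1 - 1 / p)) /
          (χ ^ (1 - 1 / p) + β / (2 * V0) ^ (1 - 1 / p))) ^ 2
        < gamFun β p V / gamFun β p V0 ∧
      0 < (1 - (β / (2 * V0) ^ (1 - 1 / p)) * (1 - χ ^ (1 - 1 / p)) /
          (χ ^ (1 - 1 / p) + β / (2 * V0) ^ (1 - 1 / p))) ^ 2 ∧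
      (1 - (β / (2 * V0) ^ (1 - 1 / p)) * (1 - χ ^ (1 - 1 / p)) /
          (χ ^ (1 - 1 / p) + β / (2 * V0) ^ (1 - 1 / p))) ^ 2 < 1 := by
  obtain ⟨hp1, hp2⟩ := hp
  obtain ⟨hχ0, hχ1⟩ := hχ
  have hq0 : 0 < 1 - 1/p := by
    have hpp : 0 < p := by linarith
    have : 1/p < 1 := by rw [div_lt_one hpp]; linarith
    linarith
  set q : ℝ := 1 - 1/p with hq
  intro V h1 h2
  have hV : 0 < V := lt_trans (by positivity) h1
  set x := χ ^ q with hxdef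
  set a := V ^ q with hadef
  set b := V0 ^ q with hbdef
  set c := (2:ℝ) ^ q with hcdef
  have hx0 : 0 < x := Real.rpow_pos_of_pos hχ0 q
  have hx1 : x < 1 := Real.rpow_lt_one hχ0.le hχ1 hq0
  have ha0 : 0 < a := Real.rpow_pos_of_pos hV q
  have hb0 : 0 < b := Real.rpow_pos_of_pos hV0 q
  have hc0 : 0 < c := Real.rpow_pos_of_pos two_pos q
  have hab : x * b < a := by
    have h := Real.rpow_lt_rpow (by positivity) h1 hq0
    rwa [Real.mul_rpow hχ0.le hV0.le] at h
  have hba : a < b := Real.rpow_lt_rpow hV.le h2 hq0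
  have h2V0 : (2*V0) ^ q = c * b := Real.mul_rpow (by norm_num) hV0.le
  have h2V : (2*V) ^ q = c * a := Real.mul_rpow (by norm_num) hV.le
  have hsq : ∀ y : ℝ, 0 ≤ y → y ^ (2 - 2/p) = (y ^ q) ^ 2 := by
    intro y hy
    rw [show (2 - 2/p) = q * 2 by rw [hq]; ring, Real.rpow_mul hy,
      show ((2:ℝ)) = ((2:ℕ):ℝ) by norm_num, Real.rpow_natCast]
  have hgV : gamFun β p V = 4*β*c*a^2/((c*a+β)^2) := by
    rw [gamFun, if_neg hV.ne', ← hq, hsq V hV.le, h2V]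
  have hgV0 : gamFun β p V0 = 4*β*c*b^2/((c*b+β)^2) := by
    rw [gamFun, if_neg hV0.ne', ← hq, hsq V0 hV0.le, h2V0]
  have hden1 : (0:ℝ) < c*a+β := by positivity
  have hden2 : (0:ℝ) < c*b+β := by positivity
  have hden3 : (0:ℝ) < x*c*b+β := by positivity
  have hratio : gamFun β p V / gamFun β p V0 = (a*(c*b+β)/(b*(c*a+β)))^2 := by
    rw [hgV, hgV0]
    field_simp
  have hE : 1 - (β / (2 * V0) ^ q) * (1 - x) / (x + β / (2 * V0) ^ q)
      = x*(c*b+β)/(x*c*b+β) := by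
    rw [h2V0]
    have hne : x + β/(c*b) ≠ 0 := by positivity
    field_simp
    ring
  rw [hratio, hE]
  have hEpos : 0 < x*(c*b+β)/(x*c*b+β) := by positivity
  have hEltR : x*(c*b+β)/(x*c*b+β) < a*(c*b+β)/(b*(c*a+β)) := by
    rw [div_lt_div_iff₀ hden3 (by positivity)]
    nlinarith [mul_pos (mul_pos hden2 hβ) (sub_pos.mpr hab)]
  have hElt1 : x*(c*b+β)/(x*c*b+β) < 1 := by
    rw [div_lt_one hden3]
    have hxβ : x*β < β := mul_lt_of_lt_one_left hβ hx1
    have : x*(c*b+β) = x*c*b + x*β := by ring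
    linarith
  refine ⟨?_, by positivity, ?_⟩
  · exact pow_lt_pow_left₀ hEltR hEpos.le two_ne_zero
  · exact pow_lt_one₀ hEpos.le hElt1 two_ne_zero
end

section
/- Let l ≥ 1 and ν ≥ 1 be integers, let c_1, …, c_{ν−1} be real constants, let η > 0, q ∈ (1,2) and δ ≥ 0, and define C(s) = ((sᵀs)^{1−1/q} − η)/((sᵀs)^{1−1/q} + η) for s ∈ ℝ^l. For a sequence f : ℕ → ℝ^l let (Δf)(k) = f(k+1) − f(k) and let Δ^μ denote the μ-fold iterate. Let y, y^d, F, F̂, v : ℕ → ℝ^l, set e_k := y_k − y^d_k and s_k := (Δ^{ν−1}e)(k) + Σ_{i=1}^{ν−1} c_i (Δ^{ν−1−i}e)(k). Suppose (Δ^ν y)(k) = F_k + v_k for all k, that v_k = (Δ^ν y^d)(k) − (2η/((s_kᵀs_k)^{1−1/q} + η))·s_k − F̂_k − Σ_{i=1}^{ν−1} c_i (Δ^{ν−i}e)(k) for all k, and that ‖F̂_k − F_k‖ ≤ δ for all k. Then there exist a constant R > 0 (depending only on η, q and δ) and an integer N ∈ ℕ such that ‖s_k‖ ≤ R for all k ≥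 N. -/
/-!
The closed loop is the recursion `s (k+1) = C(s k) • s k - (F̂ k - F k)`, and
`C(s) = (‖s‖^σ - η) / (‖s‖^σ + η)` with `σ = 2 (1 - 1/q) ∈ (0, 1)`. Since `|C(s)| ≤ 1`, the norm
`‖s‖` grows by at most `δ` per step. For large `‖s‖` we have `C(s) ≥ 0` and
`‖s‖ - C(s) ‖s‖ = 2η ‖s‖ / (‖s‖^σ + η) ≳ ‖s‖^(1-σ) → ∞`, so beyond a radius `R₀` depending only on
`η, q, δ` the norm drops by at least `1` per step. Hence `‖s k‖` enters `[0, R₀ + δ]` and stays.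
-/

open scoped InnerProductSpace

/-- Forward finite difference of a sequence. -/
noncomputable def fdiff {l : ℕ} (f : ℕ → EuclideanSpace ℝ (Fin l)) : ℕ → EuclideanSpace ℝ (Fin l) :=
  fun k => f (k + 1) - f k

/-- The control gain function C of Lemma 2. -/
noncomputable def Cfun (l : ℕ) (η q : ℝ) (s : EuclideanSpace ℝ (Fin l)) : ℝ :=
  (⟪s, s⟫_ℝ ^ (1 - 1 / q) - η) / (⟪s, s⟫_ℝ ^ (1 - 1 / q) + η)

/-- The sliding variable s_k = e_k^{(ν-1)} + Σ_{i=1}^{ν-1} c_i e_k^{(ν-1-i)}. -/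
noncomputable def slide (l ν : ℕ) (c : ℕ → ℝ) (e : ℕ → EuclideanSpace ℝ (Fin l)) :
    ℕ → EuclideanSpace ℝ (Fin l) :=
  fun k => fdiff^[ν - 1] e k + ∑ i ∈ Finset.Icc 1 (ν - 1), c i • fdiff^[ν - 1 - i] e k

open Filter

section FiniteDifference

variable {l : ℕ}

lemma iterate_fdiff_apply_succ (f : ℕ → EuclideanSpace ℝ (Fin l)) (μ k : ℕ) :
    fdiff^[μ] f (k + 1) = fdiff^[μ] f k + fdiff^[μ + 1] f k := by
  rw [Function.iterate_succ_apply', fdiff]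
  abel

lemma iterate_fdiff_sub (f g : ℕ → EuclideanSpace ℝ (Fin l)) (n : ℕ) :
    fdiff^[n] (f - g) = fdiff^[n] f - fdiff^[n] g := by
  induction n with
  | zero => rfl
  | succ n ih =>
    simp only [Function.iterate_succ_apply', ih]
    funext k
    simp only [fdiff, Pi.sub_apply]
    abel

lemma slide_succ {ν : ℕ} (hν : 1 ≤ ν) (c : ℕ → ℝ) (e : ℕ → EuclideanSpace ℝ (Fin l)) (k : ℕ) :
    slide l ν c e (k + 1) = slide l ν c e k + fdiff^[ν] e k
      + ∑ i ∈ Finset.Icc 1 (ν - 1), c i • fdiff^[ν - i] e k := by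
  have hsplit : ∀ i ∈ Finset.Icc 1 (ν - 1),
      c i • fdiff^[ν - 1 - i] e (k + 1) = c i • fdiff^[ν - 1 - i] e k + c i • fdiff^[ν - i] e k := by
    intro i hi
    have : ν - 1 - i + 1 = ν - i := by grind
    rw [iterate_fdiff_apply_succ, this, smul_add]
  simp only [slide]
  rw [Finset.sum_congr rfl hsplit, Finset.sum_add_distrib, iterate_fdiff_apply_succ,
    Nat.sub_add_cancel hν]
  abel

end FiniteDifference

noncomputable def radialGain (η σ x : ℝ) : ℝ := (x ^ σ - η) / (x ^ σ + η)

lemma abs_radialGain_le_one {η σ x : ℝ} (hη : 0 < η) (hx : 0 ≤ x) : |radialGain η σ x| ≤ 1 := by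
  have ha : 0 ≤ x ^ σ := Real.rpow_nonneg hx σ
  rw [radialGain, abs_le, le_div_iff₀ (by linarith), div_le_one (by linarith)]
  constructor <;> linarith

lemma eventually_abs_radialGain_mul_add_le {η σ : ℝ} (hη : 0 < η) (hσ₀ : 0 < σ) (hσ₁ : σ < 1)
    (M : ℝ) : ∀ᶠ x in atTop, |radialGain η σ x| * x + M ≤ x := by
  have hgain : ∀ᶠ x : ℝ in atTop, η ≤ x ^ σ := (tendsto_rpow_atTop hσ₀).eventually_ge_atTop η
  have hmargin : ∀ᶠ x : ℝ in atTop, M ≤ η * x ^ (1 - σ) :=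
    ((tendsto_rpow_atTop (sub_pos.2 hσ₁)).const_mul_atTop hη).eventually_ge_atTop M
  filter_upwards [hgain, hmargin, eventually_gt_atTop 0] with x hgain hmargin hx
  have ha : 0 < x ^ σ := by linarith
  rw [Real.rpow_sub hx, Real.rpow_one, mul_div_assoc', le_div_iff₀ ha] at hmargin
  have hC : 0 ≤ (x ^ σ - η) / (x ^ σ + η) := div_nonneg (by linarith) (by linarith)
  rw [radialGain, abs_of_nonneg hC, div_mul_eq_mul_div,
    div_add' _ _ _ (by linarith), div_le_iff₀ (by linarith)]
  -- `x - C x = 2ηx / (a + η) ≥ ηx / a`, because `a + η ≤ 2a` once `a = x^σ ≥ η`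
  rcases le_or_gt 0 M with hM | hM <;> nlinarith

lemma Cfun_eq_radialGain {l : ℕ} (η q : ℝ) (s : EuclideanSpace ℝ (Fin l)) :
    Cfun l η q s = radialGain η (2 * (1 - 1 / q)) ‖s‖ := by
  rw [Cfun, radialGain, real_inner_self_eq_norm_sq, ← Real.rpow_natCast,
    ← Real.rpow_mul (norm_nonneg s), Nat.cast_ofNat]

lemma slide_succ_eq_Cfun_smul_sub {l ν : ℕ} (hν : 1 ≤ ν) {c : ℕ → ℝ} {η q : ℝ} (hη : 0 < η)
    {y yd F Fhat v e s : ℕ → EuclideanSpace ℝ (Fin l)} (he : e = y - yd) (hs : s = slide l ν c e)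
    (hmodel : ∀ k, fdiff^[ν] y k = F k + v k)
    (hctrl : ∀ k, v k = fdiff^[ν] yd k
      - (2 * η / (⟪s k, s k⟫_ℝ ^ (1 - 1 / q) + η)) • s k
      - Fhat k
      - ∑ i ∈ Finset.Icc 1 (ν - 1), c i • fdiff^[ν - i] e k) (k : ℕ) :
    s (k + 1) = Cfun l η q (s k) • s k - (Fhat k - F k) := by
  have hC : Cfun l η q (s k) = 1 - 2 * η / (⟪s k, s k⟫_ℝ ^ (1 - 1 / q) + η) := by
    have ha : 0 ≤ ⟪s k, s k⟫_ℝ ^ (1 - 1 / q) := Real.rpow_nonneg real_inner_self_nonneg _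
    rw [Cfun]
    field_simp
    ring
  have hde : fdiff^[ν] e k = fdiff^[ν] y k - fdiff^[ν] yd k := by
    rw [he, iterate_fdiff_sub, Pi.sub_apply]
  rw [hC, sub_smul, one_smul, hs, slide_succ hν, ← hs, hde, hmodel, hctrl]
  abel

lemma exists_forall_ge_le_add_of_decrease_above {x : ℕ → ℝ} {R δ ε : ℝ} (hε : 0 < ε)
    (hgrow : ∀ k, x (k + 1) ≤ x k + δ) (hdecr : ∀ k, R ≤ x k → x (k + 1) ≤ x k - ε) :
    ∃ N, ∀ k ≥ N, x k ≤ R + δ := by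
  have hbelow : ∃ N, x N < R := by
    by_contra! habove
    have hdesc : ∀ k : ℕ, x k ≤ x 0 - k * ε := by
      intro k
      induction k with
      | zero => simp
      | succ k ih => push_cast; linarith [hdecr k (habove k)]
    obtain ⟨K, hK⟩ := exists_nat_gt ((x 0 - R) / ε)
    rw [div_lt_iff₀ hε] at hK
    linarith [hdesc K, habove K]
  obtain ⟨N, hN⟩ := hbelow
  refine ⟨N + 1, fun k hk => ?_⟩
  induction k, hk using Nat.le_induction with
  | base => linarith [hgrow N]
  | succ k _ ih =>
    rcases lt_or_ge (x k) R with hlt | hge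
    · linarith [hgrow k]
    · linarith [hdecr k hge]

theorem stmt_16_general (l ν : ℕ) (hν : 1 ≤ ν) (c : ℕ → ℝ)
    (η q δ : ℝ) (hη : 0 < η) (hq : q ∈ Set.Ioo (1:ℝ) 2) :
    ∃ R : ℝ, 0 < R ∧
      ∀ (y yd F Fhat v e s : ℕ → EuclideanSpace ℝ (Fin l)),
        (∀ k, e k = y k - yd k) →
        s = slide l ν c e →
        (∀ k, fdiff^[ν] y k = F k + v k) →
        (∀ k, v k = fdiff^[ν] yd k
          - (2 * η / (⟪s k, s k⟫_ℝ ^ (1 - 1 / q) + η)) • s k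
          - Fhat k
          - ∑ i ∈ Finset.Icc 1 (ν - 1), c i • fdiff^[ν - i] e k) →
        (∀ k, ‖Fhat k - F k‖ ≤ δ) →
        ∃ N : ℕ, ∀ k ≥ N, ‖s k‖ ≤ R := by
  obtain ⟨hq₁, hq₂⟩ := hq
  have hσ₀ : 0 < 2 * (1 - 1 / q) := by
    have : 1 / q < 1 := by rw [div_lt_one (by linarith)]; exact hq₁
    linarith
  have hσ₁ : 2 * (1 - 1 / q) < 1 := by
    have : 1 / 2 < 1 / q := one_div_lt_one_div_of_lt (by linarith) hq₂
    linarith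
  obtain ⟨R₀, hR₀⟩ := eventually_atTop.1 <|
    (eventually_abs_radialGain_mul_add_le hη hσ₀ hσ₁ (δ + 1)).and (eventually_gt_atTop (-δ))
  refine ⟨R₀ + δ, by linarith [(hR₀ R₀ le_rfl).2], ?_⟩
  intro y yd F Fhat v e s he hs hmodel hctrl herr
  have hstep : ∀ k, ‖s (k + 1)‖ ≤ |radialGain η (2 * (1 - 1 / q)) ‖s k‖| * ‖s k‖ + δ := by
    intro k
    rw [slide_succ_eq_Cfun_smul_sub hν hη (funext he) hs hmodel hctrl, ← Cfun_eq_radialGain,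
      ← Real.norm_eq_abs, ← norm_smul]
    exact (norm_sub_le _ _).trans (add_le_add le_rfl (herr k))
  refine exists_forall_ge_le_add_of_decrease_above one_pos (fun k => ?_) (fun k hk => ?_)
  · have hC := abs_radialGain_le_one (σ := 2 * (1 - 1 / q)) hη (norm_nonneg (s k))
    linarith [hstep k, mul_le_of_le_one_left (norm_nonneg (s k)) hC]
  · linarith [hstep k, (hR₀ _ hk).1]

/-- Corollary 2 (robustness): a uniformly bounded ultra-local-model estimation error makes
the sliding variable ultimately bounded, with a bound depending only on η, q and δ. -/
theorem stmt_16 (l ν : ℕ) (hl : 1 ≤ l) (hν : 1 ≤ ν) (c : ℕ → ℝ)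
    (η q δ : ℝ) (hη : 0 < η) (hq : q ∈ Set.Ioo (1:ℝ) 2) (hδ : 0 ≤ δ) :
    ∃ R : ℝ, 0 < R ∧
      ∀ (y yd F Fhat v e s : ℕ → EuclideanSpace ℝ (Fin l)),
        (∀ k, e k = y k - yd k) →
        s = slide l ν c e →
        (∀ k, fdiff^[ν] y k = F k + v k) →
        (∀ k, v k = fdiff^[ν] yd k
          - (2 * η / (⟪s k, s k⟫_ℝ ^ (1 - 1 / q) + η)) • s k
          - Fhat k
          - ∑ i ∈ Finset.Icc 1 (ν - 1), c i • fdiff^[ν - i] e k) →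
        (∀ k, ‖Fhat k - F k‖ ≤ δ) →
        ∃ N : ℕ, ∀ k ≥ N, ‖s k‖ ≤ R :=
  stmt_16_general l ν hν c η q δ hη hq
end
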